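/- Let b₁, …, b₆, c₁, …, c₆, s₁, …, s₆ be real numbers with b₆ = b₁, b₃ = b₄, s₁ = s₄ = 0, b₁ ≠ 0 and b₄ ≠ 0, and with each cᵢ ∈ (−1, 1). Then Q₁⁺ = Q₄⁺ and Q₁⁻ = Q₄⁻ hold as polynomials in ℂ[x] if and only if c₂ = c₅, c₆b₆ + c₁b₁ = c₃b₃ + c₄b₄, s₆ = s₂, s₃ = s₅, and b₂ = b₅ or b₂ = −b₅. (The first alternative is Dietmaier's family; the second is a second component of the solution set.) -/

import Mathlib

/-!
Each `Qᵢ^±` is a monic quadratic `(X + a)² + e`, so two of them agree iff the real and imaginary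
parts of `a` and of `e` agree. The equations coming from `Q⁻` are those coming from `Q⁺` with the
sign of every term that is odd under `b, c, s₂, s₄, s₆ ↦ -b, -c, -s₂, -s₄, -s₆` flipped, so taking
their sums and differences separates the two kinds of terms. Under the hypotheses this gives
`b₁b₄(c₂ - c₅) = 0`, then a `2 × 2` linear system for `s₂ - s₆` and `s₃ - s₅` with determinant
`1 - c₂² ≠ 0`, and finally `(1 - c₂²)(b₂² - b₅²) = 0`.
-/

open Polynomial

noncomputable section

/-- The quad polynomial `Qᵢ⁺`, with 0-based indexing: `Qp b c s i` is `Q_{i+1}⁺` of the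
parameters `b₁,…,b₆ = b 0,…,b 5`, etc. (indices mod 6). -/
def Qp (b c s : Fin 6 → ℝ) (i : Fin 6) : Polynomial ℂ :=
  (X + C (((b (i+2) * c (i+2) - b i * c i : ℝ) : ℂ) / 2 - ((s i : ℝ) : ℂ) / 2 * Complex.I))^2
  + C (Complex.I / 2 * ((b i * s (i+1) + b (i+2) * s (i+2) + s (i+1) * b (i+2) * c (i+1)
        + s (i+2) * b i * c (i+1) : ℝ) : ℂ)
      - ((b i * b (i+2) * c (i+1) - s (i+1) * s (i+2) * c (i+1) : ℝ) : ℂ) / 2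
      + (((s (i+1))^2 + (s (i+2))^2 - (b i)^2 + (b (i+1))^2 - (b (i+2))^2
        - (b (i+1))^2 * (c (i+1))^2 : ℝ) : ℂ) / 4)

/-- The quad polynomial `Qᵢ⁻`: obtained from `Qᵢ⁺` by negating all `b j`, all `c j`,
and `s₂, s₄, s₆` (the `s j` with odd 0-based index `j`), keeping `s₁, s₃, s₅`. -/
def Qm (b c s : Fin 6 → ℝ) (i : Fin 6) : Polynomial ℂ :=
  Qp (fun j => -b j) (fun j => -c j) (fun j => if j.val % 2 = 1 then -s j else s j) i

theorem X_add_C_sq_add_C_inj {R : Type*} [CommRing R] [NoZeroDivisors R] [CharZero R]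
    {a e a' e' : R} :
    (X + C a) ^ 2 + C e = (X + C a') ^ 2 + C e' ↔ a = a' ∧ e = e' := by
  refine ⟨fun h => ?_, by rintro ⟨rfl, rfl⟩; rfl⟩
  have h1 := congrArg (coeff · 1) h
  have h0 := congrArg (coeff · 0) h
  simp only [add_sq, coeff_add, coeff_X_pow, coeff_C, coeff_X, coeff_mul_C,
      mul_coeff_one, ← C_pow] at h1 h0
  norm_num at h1 h0
  exact ⟨h1, by rw [h1] at h0; linear_combination h0⟩

namespace Qp

variable (b c s : Fin 6 → ℝ) (i : Fin 6)

def shift : ℝ := (b (i+2) * c (i+2) - b i * c i) / 2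

def constRe : ℝ :=
  -(b i * b (i+2) * c (i+1) - s (i+1) * s (i+2) * c (i+1)) / 2
    + ((s (i+1))^2 + (s (i+2))^2 - (b i)^2 + (b (i+1))^2 - (b (i+2))^2
        - (b (i+1))^2 * (c (i+1))^2) / 4

def constIm : ℝ :=
  (b i * s (i+1) + b (i+2) * s (i+2) + s (i+1) * b (i+2) * c (i+1) + s (i+2) * b i * c (i+1)) / 2

theorem eq_sq_add :
    Qp b c s i = (X + C ⟨shift b c i, -s i / 2⟩) ^ 2 + C ⟨constRe b c s i, constIm b c s i⟩ := by
  unfold Qp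
  congr 4 <;> rw [Complex.mk_eq_add_mul_I] <;> push_cast [shift, constRe, constIm] <;> ring

end Qp

theorem Qp_eq_Qp_iff {b c s : Fin 6 → ℝ} {i j : Fin 6} :
    Qp b c s i = Qp b c s j ↔ Qp.shift b c i = Qp.shift b c j ∧ s i = s j ∧
      Qp.constRe b c s i = Qp.constRe b c s j ∧ Qp.constIm b c s i = Qp.constIm b c s j := by
  rw [Qp.eq_sq_add, Qp.eq_sq_add, X_add_C_sq_add_C_inj, Complex.ext_iff, Complex.ext_iff]
  simp only [neg_div, neg_inj, div_left_inj' (two_ne_zero' ℝ), and_assoc]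

theorem eq_and_eq_of_add_mul_eq {K : Type*} [Field K] {c x y x' y' : K} (hc : c ^ 2 ≠ 1)
    (h₁ : x + c * y = x' + c * y') (h₂ : y + c * x = y' + c * x') : x = x' ∧ y = y' := by
  have hc' : 1 - c ^ 2 ≠ 0 := sub_ne_zero.2 hc.symm
  constructor <;> refine mul_left_cancel₀ hc' ?_
  · linear_combination h₁ - c * h₂
  · linear_combination h₂ - c * h₁

/-- Under `b₆ = b₁`, `b₃ = b₄`, `s₁ = s₄ = 0`, `b₁ ≠ 0`, `b₄ ≠ 0` and `cᵢ ∈ (−1, 1)`,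
the equalities `Q₁⁺ = Q₄⁺` and `Q₁⁻ = Q₄⁻` hold iff `c₂ = c₅`,
`c₆b₆ + c₁b₁ = c₃b₃ + c₄b₄`, `s₆ = s₂`, `s₃ = s₅` and `b₂ = ±b₅`. -/
theorem quad_equalities_iff_dietmaier_or_second_component (b c s : Fin 6 → ℝ)
    (hb61 : b 5 = b 0) (hb34 : b 2 = b 3)
    (hs1 : s 0 = 0) (hs4 : s 3 = 0)
    (hb1 : b 0 ≠ 0) (hb4 : b 3 ≠ 0)
    (hc : ∀ i : Fin 6, -1 < c i ∧ c i < 1) :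
    (Qp b c s 0 = Qp b c s 3 ∧ Qm b c s 0 = Qm b c s 3) ↔
      (c 1 = c 4 ∧ c 5 * b 5 + c 0 * b 0 = c 2 * b 2 + c 3 * b 3 ∧
        s 5 = s 1 ∧ s 2 = s 4 ∧ (b 1 = b 4 ∨ b 1 = -b 4)) := by
  have hc1 : c 1 ^ 2 ≠ 1 := ((sq_lt_one_iff_abs_lt_one _).2 (abs_lt.2 (hc 1))).ne
  simp only [Qm, Qp_eq_Qp_iff, Qp.shift, Qp.constRe, Qp.constIm, Fin.reduceAdd, hb34, hb61, hs1,
    hs4, ne_eq, OfNat.ofNat_ne_zero, not_false_eq_true, div_left_inj', true_and,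
    Fin.coe_ofNat_eq_mod, zero_ne_one, ↓reduceIte, Nat.reduceMod, neg_zero]
  constructor
  · rintro ⟨⟨hshift, hre, him⟩, -, hre', him'⟩
    have hc14 : c 1 = c 4 :=
      mul_left_cancel₀ (mul_ne_zero hb1 hb4) (by linear_combination hre' - hre)
    rw [← hc14] at hre him him'
    obtain ⟨hs15, hs24⟩ : s 1 = s 5 ∧ s 2 = s 4 := eq_and_eq_of_add_mul_eq hc1
      (mul_left_cancel₀ hb1 (by linear_combination (him + him') / 2))
      (mul_left_cancel₀ hb4 (by linear_combination (him - him') / 2))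
    rw [← hs15, ← hs24] at hre
    have hb14 : b 1 ^ 2 = b 4 ^ 2 :=
      mul_left_cancel₀ (sub_ne_zero.2 hc1.symm) (by linear_combination 4 * hre)
    exact ⟨hc14, by linarith, hs15.symm, hs24, sq_eq_sq_iff_eq_or_eq_neg.1 hb14⟩
  · rintro ⟨hc14, hbc, hs51, hs24, hb⟩
    rw [← hc14, hs51, ← hs24]
    have hb14 : b 1 ^ 2 = b 4 ^ 2 := sq_eq_sq_iff_eq_or_eq_neg.2 hb
    refine ⟨⟨by linarith, ?_, by ring⟩, by linarith, ?_, by ring⟩ <;>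
      linear_combination (1 - c 1 ^ 2) / 4 * hb14
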